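/- arXiv:1508.03824 — 2 statements merged into one kernel-verified Lean document; each statement's English description precedes it below -/
import Mathlib

section
/- Let α : ℝ → ℝ⁵ be smooth with ⟨α,α⟩ ≡ 0, ⟨α',α'⟩ ≡ 0, and ⟨α'',α''⟩ ≡ 4/9 (index-2 inner product on ℝ⁵). Define x(s,t) = (s²/2 + (27/40)⟨α'''(t),α'''(t)⟩)·α(t) + (3s/2)·α'(t) + (3/2)·α''(t). Then ⟨x(s,t), x(s,t)⟩ = 1 for all (s,t), i.e., the surface lies in the pseudo-sphere S⁴₂(1). -/
noncomputable def ip (v w : Fin 5 → ℝ) : ℝ :=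
  -(v 0 * w 0) - v 1 * w 1 + v 2 * w 2 + v 3 * w 3 + v 4 * w 4

lemma ip_comm (v w : Fin 5 → ℝ) : ip v w = ip w v := by
  unfold ip; ring

lemma ip_hasDerivAt (f g : ℝ → Fin 5 → ℝ) (f' g' : Fin 5 → ℝ) (t : ℝ)
    (hf : HasDerivAt f f' t) (hg : HasDerivAt g g' t) :
    HasDerivAt (fun t => ip (f t) (g t)) (ip f' (g t) + ip (f t) g') t := by
  have hfi : ∀ i, HasDerivAt (fun t => f t i) (f' i) t := fun i => hasDerivAt_pi.mp hf i
  have hgi : ∀ i, HasDerivAt (fun t => g t i) (g' i) t := fun i => hasDerivAt_pi.mp hg i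
  have h : HasDerivAt (fun t => -(f t 0 * g t 0) - f t 1 * g t 1 + f t 2 * g t 2
      + f t 3 * g t 3 + f t 4 * g t 4)
      ((-(f' 0 * g t 0 + f t 0 * g' 0) - (f' 1 * g t 1 + f t 1 * g' 1)
        + (f' 2 * g t 2 + f t 2 * g' 2)) + (f' 3 * g t 3 + f t 3 * g' 3)
        + (f' 4 * g t 4 + f t 4 * g' 4)) t := by
    exact (((((hfi 0).mul (hgi 0)).neg.sub ((hfi 1).mul (hgi 1))).add
      ((hfi 2).mul (hgi 2))).add ((hfi 3).mul (hgi 3))).add ((hfi 4).mul (hgi 4))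
  have : HasDerivAt (fun t => ip (f t) (g t))
      ((-(f' 0 * g t 0 + f t 0 * g' 0) - (f' 1 * g t 1 + f t 1 * g' 1)
        + (f' 2 * g t 2 + f t 2 * g' 2)) + (f' 3 * g t 3 + f t 3 * g' 3)
        + (f' 4 * g t 4 + f t 4 * g' 4)) t := by
    simpa [ip] using h
  convert this using 1
  unfold ip; ring

theorem stmt3 (α : ℝ → (Fin 5 → ℝ)) (hα : ContDiff ℝ (⊤ : ℕ∞) α)
    (h0 : ∀ t, ip (α t) (α t) = 0)
    (h1 : ∀ t, ip (deriv α t) (deriv α t) = 0)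
    (h2 : ∀ t, ip (deriv (deriv α) t) (deriv (deriv α) t) = 4 / 9)
    (x : ℝ → ℝ → (Fin 5 → ℝ))
    (hx : ∀ s t, x s t =
      (s ^ 2 / 2 + (27 / 40) *
        ip (deriv (deriv (deriv α)) t) (deriv (deriv (deriv α)) t)) • α t
      + (3 * s / 2) • deriv α t + (3 / 2 : ℝ) • deriv (deriv α) t) :
    ∀ s t : ℝ, ip (x s t) (x s t) = 1 := by
  set α1 := deriv α with hα1
  set α2 := deriv α1 with hα2
  set α3 := deriv α2 with hα3
  have hα' : ContDiff ℝ (⊤ : ℕ∞) α := hα.of_le (by simp)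
  have hα1' : ContDiff ℝ (⊤ : ℕ∞) α1 := (contDiff_infty_iff_deriv.mp hα').2
  have hα2' : ContDiff ℝ (⊤ : ℕ∞) α2 := (contDiff_infty_iff_deriv.mp hα1').2
  have hd0 : ∀ t, HasDerivAt α (α1 t) t := fun t =>
    (hα'.differentiable (by simp) t).hasDerivAt
  have hd1 : ∀ t, HasDerivAt α1 (α2 t) t := fun t =>
    (hα1'.differentiable (by simp) t).hasDerivAt
  have hd2 : ∀ t, HasDerivAt α2 (α3 t) t := fun t =>
    (hα2'.differentiable (by simp) t).hasDerivAt
  -- ⟨α, α'⟩ = 0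
  have k1 : ∀ t, ip (α t) (α1 t) = 0 := by
    intro t
    have h := ip_hasDerivAt α α (α1 t) (α1 t) t (hd0 t) (hd0 t)
    have hz : (fun t => ip (α t) (α t)) = fun _ => (0 : ℝ) := funext h0
    rw [hz] at h
    have := h.unique (hasDerivAt_const t 0)
    have hc : ip (α1 t) (α t) = ip (α t) (α1 t) := ip_comm _ _
    linarith
  -- ⟨α, α''⟩ = 0
  have k2 : ∀ t, ip (α t) (α2 t) = 0 := by
    intro t
    have h := ip_hasDerivAt α α1 (α1 t) (α2 t) t (hd0 t) (hd1 t)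
    have hz : (fun t => ip (α t) (α1 t)) = fun _ => (0 : ℝ) := funext k1
    rw [hz] at h
    have := h.unique (hasDerivAt_const t 0)
    have := h1 t
    linarith
  -- ⟨α', α''⟩ = 0
  have k3 : ∀ t, ip (α1 t) (α2 t) = 0 := by
    intro t
    have h := ip_hasDerivAt α1 α1 (α2 t) (α2 t) t (hd1 t) (hd1 t)
    have hz : (fun t => ip (α1 t) (α1 t)) = fun _ => (0 : ℝ) := funext h1
    rw [hz] at h
    have := h.unique (hasDerivAt_const t 0)
    have hc : ip (α2 t) (α1 t) = ip (α1 t) (α2 t) := ip_comm _ _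
    linarith
  -- ⟨α, α'''⟩ = 0
  have k4 : ∀ t, ip (α t) (α3 t) = 0 := by
    intro t
    have h := ip_hasDerivAt α α2 (α1 t) (α3 t) t (hd0 t) (hd2 t)
    have hz : (fun t => ip (α t) (α2 t)) = fun _ => (0 : ℝ) := funext k2
    rw [hz] at h
    have := h.unique (hasDerivAt_const t 0)
    have := k3 t
    linarith
  intro s t
  have hexp : ∀ (a b c : ℝ) (v w u : Fin 5 → ℝ),
      ip (a • v + b • w + c • u) (a • v + b • w + c • u) =
      a ^ 2 * ip v v + b ^ 2 * ip w w + c ^ 2 * ip u u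
      + 2 * a * b * ip v w + 2 * a * c * ip v u + 2 * b * c * ip w u := by
    intro a b c v w u
    simp [ip, Pi.add_apply, Pi.smul_apply, smul_eq_mul]
    ring
  rw [hx s t, hexp]
  rw [h0 t, h1 t, h2 t, k1 t, k2 t, k3 t]
  ring
end

section
/- For the surface x(s,t) = (1/(6√3))·(2s(s cos t - 3 sin t), 2s(s sin t + 3 cos t), (s²-9)cos 2t - 6s sin 2t, (s²-9)sin 2t + 6s cos 2t, √3(s²+3)), the partial derivatives satisfy ⟨x_s, x_s⟩ = 0 and ⟨x_s, x_t⟩ = -1 everywhere. -/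
noncomputable def veroneseST (s t : ℝ) : Fin 5 → ℝ :=
  (1 / (6 * Real.sqrt 3)) •
    ![2 * s * (s * Real.cos t - 3 * Real.sin t),
      2 * s * (s * Real.sin t + 3 * Real.cos t),
      (s ^ 2 - 9) * Real.cos (2 * t) - 6 * s * Real.sin (2 * t),
      (s ^ 2 - 9) * Real.sin (2 * t) + 6 * s * Real.cos (2 * t),
      Real.sqrt 3 * (s ^ 2 + 3)]

/-! The scalar `1 / (6 * √3)` factors out of both partial derivatives and contributes `1 / 108`.
The first two and the next two coordinates are rotated by the angles `t` and `2 * t`, so both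
products reduce, via `sin ^ 2 + cos ^ 2 = 1`, to polynomials in `s` that are constant. -/

open Real

theorem ip_smul_smul (a : ℝ) (v w : Fin 5 → ℝ) : ip (a • v) (a • w) = a ^ 2 * ip v w := by
  simp only [ip, Pi.smul_apply, smul_eq_mul]; ring

theorem hasDerivAt_vecEmpty {E : Type*} [NormedAddCommGroup E] [NormedSpace ℝ E] (x : ℝ) :
    HasDerivAt (fun _ => (![] : Fin 0 → E)) ![] x :=
  (hasDerivAt_const x _).congr_deriv (Subsingleton.elim _ _)

theorem hasDerivAt_veroneseST_left (s t : ℝ) :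
    HasDerivAt (fun s' => veroneseST s' t) ((1 / (6 * √3)) •
      ![4 * s * cos t - 6 * sin t, 4 * s * sin t + 6 * cos t,
        2 * s * cos (2 * t) - 6 * sin (2 * t), 2 * s * sin (2 * t) + 6 * cos (2 * t),
        2 * √3 * s]) s := by
  have hs := hasDerivAt_id' s
  have hs2 := hasDerivAt_pow 2 s
  unfold veroneseST
  refine .fun_const_smul _ ?_
  refine .finCons ?_ (.finCons ?_ (.finCons ?_ (.finCons ?_ (.finCons ?_ (hasDerivAt_vecEmpty s)))))
  · exact ((hs.const_mul 2).fun_mul ((hs.mul_const (cos t)).sub_const (3 * sin t))).congr_deriv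
      (by ring)
  · exact ((hs.const_mul 2).fun_mul ((hs.mul_const (sin t)).add_const (3 * cos t))).congr_deriv
      (by ring)
  · exact (((hs2.sub_const 9).mul_const (cos (2 * t))).fun_sub
      ((hs.const_mul 6).mul_const (sin (2 * t)))).congr_deriv (by push_cast; ring)
  · exact (((hs2.sub_const 9).mul_const (sin (2 * t))).fun_add
      ((hs.const_mul 6).mul_const (cos (2 * t)))).congr_deriv (by push_cast; ring)
  · exact ((hs2.add_const 3).const_mul √3).congr_deriv (by push_cast; ring)

theorem hasDerivAt_veroneseST_right (s t : ℝ) :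
    HasDerivAt (fun t' => veroneseST s t') ((1 / (6 * √3)) •
      ![-2 * s ^ 2 * sin t - 6 * s * cos t, 2 * s ^ 2 * cos t - 6 * s * sin t,
        -2 * (s ^ 2 - 9) * sin (2 * t) - 12 * s * cos (2 * t),
        2 * (s ^ 2 - 9) * cos (2 * t) - 12 * s * sin (2 * t), 0]) t := by
  have h2t := (hasDerivAt_id' t).const_mul 2
  have hc := hasDerivAt_cos t
  have hs := hasDerivAt_sin t
  unfold veroneseST
  refine .fun_const_smul _ ?_
  refine .finCons ?_ (.finCons ?_ (.finCons ?_ (.finCons ?_ (.finCons ?_ (hasDerivAt_vecEmpty t)))))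
  · exact (((hc.const_mul s).fun_sub (hs.const_mul 3)).const_mul (2 * s)).congr_deriv (by ring)
  · exact (((hs.const_mul s).fun_add (hc.const_mul 3)).const_mul (2 * s)).congr_deriv (by ring)
  · exact ((h2t.cos.const_mul (s ^ 2 - 9)).fun_sub (h2t.sin.const_mul (6 * s))).congr_deriv
      (by ring)
  · exact ((h2t.sin.const_mul (s ^ 2 - 9)).fun_add (h2t.cos.const_mul (6 * s))).congr_deriv
      (by ring)
  · exact hasDerivAt_const t _

theorem stmt7 : ∀ s t : ℝ,
    ip (deriv (fun s' => veroneseST s' t) s) (deriv (fun s' => veroneseST s' t) s) = 0 ∧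
    ip (deriv (fun s' => veroneseST s' t) s) (deriv (fun t' => veroneseST s t') t) = -1 := by
  intro s t
  have hscale : (1 / (6 * √3)) ^ 2 = (1 / 108 : ℝ) := by
    rw [div_pow, mul_pow, sq_sqrt (by norm_num : (0 : ℝ) ≤ 3)]; norm_num
  have h3 : √3 ^ 2 = 3 := sq_sqrt (by norm_num)
  have h1 := sin_sq_add_cos_sq t
  have h2 := sin_sq_add_cos_sq (2 * t)
  rw [(hasDerivAt_veroneseST_left s t).deriv, (hasDerivAt_veroneseST_right s t).deriv,
    ip_smul_smul, ip_smul_smul, hscale]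
  simp only [ip, Matrix.cons_val_zero, Matrix.cons_val_one, Matrix.cons_val_two,
    Matrix.cons_val_three, Matrix.cons_val_four, Matrix.head_cons, Matrix.tail_cons]
  constructor
  · linear_combination
      (1 / 108 : ℝ) * (-(16 * s ^ 2 + 36) * h1 + (4 * s ^ 2 + 36) * h2 + 4 * s ^ 2 * h3)
  · linear_combination (1 / 108 : ℝ) * (12 * s ^ 2 * h1 - (12 * s ^ 2 + 108) * h2)
end
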